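/- arXiv:1604.05884 — 2 statements merged into one kernel-verified Lean document; each statement's English description precedes it below -/
import Mathlib

section
/- Let n ≥ 1 be an integer, let β be a real with 0 < β ≤ 1/n, let z₀ > 0 and let T be real with 0 < T < n/(2 z₀). Suppose Λ : [0, T] → ℝ is differentiable with Λ(t) > 0 and Λ′(t) ≥ 2β z(t) Λ(t) for all t ∈ [0, T], where z(t) = z₀/(1 − (2/n) z₀ t). Then Λ(t) ≥ Λ(0) · (1 − (2/n) z₀ t)^{−βn} for all t ∈ [0, T]. -/
/-!
With `u(t) = 1 - (2/n) z₀ t` and `p = βn` one has `2β z(t) = p · (-u'(t)) / u(t)`, so the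
differential inequality says exactly that `Λ · u^p` has nonnegative derivative. Hence
`Λ(t) u(t)^p ≥ Λ(0) u(0)^p = Λ(0)`, which is the claimed bound.
-/

open Set

theorem monotoneOn_mul_rpow_of_hasDerivAt {D : Set ℝ} (hD : Convex ℝ D) {Λ Λ' u u' : ℝ → ℝ}
    {p : ℝ} (hΛ : ∀ t ∈ D, HasDerivAt Λ (Λ' t) t) (hu : ∀ t ∈ D, HasDerivAt u (u' t) t)
    (hu_pos : ∀ t ∈ D, 0 < u t) (h : ∀ t ∈ D, 0 ≤ u t * Λ' t + p * u' t * Λ t) :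
    MonotoneOn (fun t => Λ t * u t ^ p) D := by
  have hderiv : ∀ t ∈ D, HasDerivAt (fun t => Λ t * u t ^ p)
      (u t ^ (p - 1) * (u t * Λ' t + p * u' t * Λ t)) t := by
    intro t ht
    refine ((hΛ t ht).mul ((hu t ht).rpow_const (Or.inl (hu_pos t ht).ne'))).congr_deriv ?_
    rw [Real.rpow_sub_one (hu_pos t ht).ne']
    field_simp [(hu_pos t ht).ne']
  refine monotoneOn_of_hasDerivWithinAt_nonneg hD
    (fun t ht => (hderiv t ht).continuousAt.continuousWithinAt)
    (fun t ht => (hderiv t (interior_subset ht)).hasDerivWithinAt) fun t ht => ?_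
  have ht := interior_subset ht
  exact mul_nonneg (Real.rpow_nonneg (hu_pos t ht).le _) (h t ht)

theorem one_sub_mul_pos_of_mem_Icc {n : ℕ} (hn : 1 ≤ n) {z₀ T t : ℝ} (hz₀ : 0 < z₀)
    (hT : T < n / (2 * z₀)) (ht : t ∈ Icc 0 T) : 0 < 1 - (2 / (n : ℝ)) * z₀ * t := by
  have hn₀ : (0 : ℝ) < n := by exact_mod_cast hn
  have hlt : (2 / (n : ℝ)) * z₀ * t < 1 := by
    calc (2 / (n : ℝ)) * z₀ * t ≤ (2 / (n : ℝ)) * z₀ * T := by gcongr; exact ht.2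
      _ < (2 / (n : ℝ)) * z₀ * (n / (2 * z₀)) := by gcongr
      _ = 1 := by field_simp
  linarith

theorem stmt8_general (n : ℕ) (hn : 1 ≤ n) (β z₀ T : ℝ)
    (hz₀ : 0 < z₀)
    (hT : T < n / (2 * z₀))
    (z : ℝ → ℝ) (hz : ∀ t, z t = z₀ / (1 - (2 / (n : ℝ)) * z₀ * t))
    (Λ Λ' : ℝ → ℝ)
    (hderiv : ∀ t ∈ Set.Icc (0 : ℝ) T, HasDerivAt Λ (Λ' t) t)
    (hineq : ∀ t ∈ Set.Icc (0 : ℝ) T, Λ' t ≥ 2 * β * z t * Λ t) :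
    ∀ t ∈ Set.Icc (0 : ℝ) T,
      Λ t ≥ Λ 0 * (1 - (2 / (n : ℝ)) * z₀ * t) ^ (-(β * n)) := by
  set u : ℝ → ℝ := fun t => 1 - (2 / (n : ℝ)) * z₀ * t
  have hu_pos : ∀ t ∈ Icc 0 T, 0 < u t := fun t ht => one_sub_mul_pos_of_mem_Icc hn hz₀ hT ht
  have hu : ∀ t, HasDerivAt u (-((2 / (n : ℝ)) * z₀)) t := fun t => by
    simpa using ((hasDerivAt_id t).const_mul ((2 / (n : ℝ)) * z₀)).const_sub 1
  have hmono : MonotoneOn (fun t => Λ t * u t ^ (β * n)) (Icc 0 T) := by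
    refine monotoneOn_mul_rpow_of_hasDerivAt (convex_Icc 0 T) hderiv (fun t _ => hu t) hu_pos
      fun t ht => ?_
    have hcoef : β * n * -((2 / (n : ℝ)) * z₀) = -(2 * β * z₀) := by field_simp
    have huz : u t * z t = z₀ := by rw [hz t]; exact mul_div_cancel₀ _ (hu_pos t ht).ne'
    calc 0 = u t * (2 * β * z t * Λ t) - 2 * β * z₀ * Λ t := by rw [← huz]; ring
      _ ≤ u t * Λ' t - 2 * β * z₀ * Λ t := by gcongr; exacts [(hu_pos t ht).le, hineq t ht]
      _ = u t * Λ' t + β * n * -((2 / (n : ℝ)) * z₀) * Λ t := by rw [hcoef]; ring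
  intro t ht
  have h₀ : Λ 0 ≤ Λ t * u t ^ (β * n) := by
    simpa [u] using hmono ⟨le_rfl, ht.1.trans ht.2⟩ ht ht.1
  rw [ge_iff_le, Real.rpow_neg (hu_pos t ht).le, ← div_eq_mul_inv,
    div_le_iff₀ (Real.rpow_pos_of_pos (hu_pos t ht) _)]
  exact h₀

/-- Power-law lower bound: under `Λ'(t) ≥ 2β z(t) Λ(t)` with
`z(t) = z₀/(1 - (2/n) z₀ t)` and `0 < β ≤ 1/n`, one has
`Λ(t) ≥ Λ(0) (1 - (2/n) z₀ t)^{-β n}` on `[0, T]`. -/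
theorem stmt8 (n : ℕ) (hn : 1 ≤ n) (β z₀ T : ℝ)
    (hβ : 0 < β) (hβn : β ≤ 1 / n) (hz₀ : 0 < z₀)
    (hT0 : 0 < T) (hT : T < n / (2 * z₀))
    (z : ℝ → ℝ) (hz : ∀ t, z t = z₀ / (1 - (2 / (n : ℝ)) * z₀ * t))
    (Λ Λ' : ℝ → ℝ)
    (hderiv : ∀ t ∈ Set.Icc (0 : ℝ) T, HasDerivAt Λ (Λ' t) t)
    (hpos : ∀ t ∈ Set.Icc (0 : ℝ) T, 0 < Λ t)
    (hineq : ∀ t ∈ Set.Icc (0 : ℝ) T, Λ' t ≥ 2 * β * z t * Λ t) :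
    ∀ t ∈ Set.Icc (0 : ℝ) T,
      Λ t ≥ Λ 0 * (1 - (2 / (n : ℝ)) * z₀ * t) ^ (-(β * n)) :=
  stmt8_general n hn β z₀ T hz₀ hT z hz Λ Λ' hderiv hineq
end

section
/- Let n > 0, S₀ > 0, T > 0, and let r : [0, T] → ℝ be continuous. Define y(t) = S₀ exp(−(2/n) ∫₀ᵗ r) / (1 − (2/n) S₀ ∫₀ᵗ exp(−(2/n) ∫₀ˢ r) ds) and assume its denominator is positive on [0, T]. Suppose S : [0, T] → ℝ is differentiable with S(0) ≥ S₀ and S′(t) ≥ (2/n) S(t) (S(t) − r(t)) for all t ∈ [0, T]. Then S(t) ≥ y(t) for all t ∈ [0, T]. -/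
open intervalIntegral

/-- FTC at an interior point for a function continuous on `[0,T]`. -/
lemma aux_ftc {T : ℝ} (f : ℝ → ℝ) (hf : ContinuousOn f (Set.Icc 0 T))
    {t : ℝ} (ht : t ∈ Set.Ioo (0:ℝ) T) :
    HasDerivAt (fun u => ∫ x in (0:ℝ)..u, f x) (f t) t := by
  have hsub : Set.uIcc (0:ℝ) t ⊆ Set.Icc 0 T := by
    rw [Set.uIcc_of_le ht.1.le]
    exact Set.Icc_subset_Icc le_rfl ht.2.le
  have hint : IntervalIntegrable f MeasureTheory.volume 0 t :=
    (hf.mono hsub).intervalIntegrable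
  have hmem : Set.Ioo (0:ℝ) T ∈ nhds t := (isOpen_Ioo).mem_nhds ht
  have hmeas : StronglyMeasurableAtFilter f (nhds t) :=
    ⟨Set.Ioo 0 T, hmem,
      (hf.mono Set.Ioo_subset_Icc_self).aestronglyMeasurable measurableSet_Ioo⟩
  have hcont : ContinuousAt f t :=
    (hf.mono Set.Ioo_subset_Icc_self).continuousAt hmem
  exact intervalIntegral.integral_hasDerivAt_right hint hmeas hcont

/-- Continuity of the primitive on `[0,T]`. -/
lemma aux_primitive_cont {T : ℝ} (hT : 0 ≤ T) (f : ℝ → ℝ)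
    (hf : ContinuousOn f (Set.Icc 0 T)) :
    ContinuousOn (fun u => ∫ x in (0:ℝ)..u, f x) (Set.Icc 0 T) := by
  have := intervalIntegral.continuousOn_primitive_interval
    (a := (0:ℝ)) (b := T) (μ := MeasureTheory.volume) (f := f)
    (by rw [Set.uIcc_of_le hT]; exact hf.integrableOn_Icc)
  rwa [Set.uIcc_of_le hT] at this

/-- Scalar comparison principle for the normalized flow: if `S` is differentiable
on `[0, T]` with `S(0) ≥ S₀` and `S'(t) ≥ (2/n) S(t)(S(t) - r(t))`, then
`S(t) ≥ y(t)` where `y(t) = S₀ e^{-(2/n)∫₀ᵗ r} / (1 - (2/n) S₀ ∫₀ᵗ e^{-(2/n)∫₀ˢ r} ds)`,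
assuming the denominator is positive on `[0, T]`. -/
theorem stmt11 (n S₀ T : ℝ) (hn : 0 < n) (hS₀ : 0 < S₀) (hT : 0 < T)
    (r : ℝ → ℝ) (hr : ContinuousOn r (Set.Icc 0 T))
    (y : ℝ → ℝ)
    (hy : ∀ t, y t =
      S₀ * Real.exp (-(2 / n) * ∫ u in (0:ℝ)..t, r u) /
        (1 - (2 / n) * S₀ *
          ∫ s in (0:ℝ)..t, Real.exp (-(2 / n) * ∫ u in (0:ℝ)..s, r u)))
    (hden : ∀ t ∈ Set.Icc (0 : ℝ) T,
      0 < 1 - (2 / n) * S₀ *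
        ∫ s in (0:ℝ)..t, Real.exp (-(2 / n) * ∫ u in (0:ℝ)..s, r u))
    (S S' : ℝ → ℝ)
    (hderiv : ∀ t ∈ Set.Icc (0 : ℝ) T, HasDerivAt S (S' t) t)
    (hS0 : S 0 ≥ S₀)
    (hineq : ∀ t ∈ Set.Icc (0 : ℝ) T, S' t ≥ (2 / n) * S t * (S t - r t)) :
    ∀ t ∈ Set.Icc (0 : ℝ) T, S t ≥ y t := by
  -- Notation
  set E : ℝ → ℝ := fun t => Real.exp (-(2 / n) * ∫ u in (0:ℝ)..t, r u) with hE
  set D : ℝ → ℝ := fun t => 1 - (2 / n) * S₀ * ∫ s in (0:ℝ)..t, E s with hD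
  have hDpos : ∀ t ∈ Set.Icc (0:ℝ) T, 0 < D t := hden
  have hyED : ∀ t, y t = S₀ * E t / D t := hy
  -- Continuity facts
  have hRcont : ContinuousOn (fun t => ∫ u in (0:ℝ)..t, r u) (Set.Icc 0 T) :=
    aux_primitive_cont hT.le r hr
  have hEcont : ContinuousOn E (Set.Icc 0 T) :=
    Real.continuous_exp.comp_continuousOn (continuousOn_const.mul hRcont)
  have hIcont : ContinuousOn (fun t => ∫ s in (0:ℝ)..t, E s) (Set.Icc 0 T) := by
    exact aux_primitive_cont hT.le E hEcont
  have hDcont : ContinuousOn D (Set.Icc 0 T) := by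
    exact continuousOn_const.sub (continuousOn_const.mul (aux_primitive_cont hT.le E hEcont))
  have hycont : ContinuousOn y (Set.Icc 0 T) := by
    have : ContinuousOn (fun t => S₀ * E t / D t) (Set.Icc 0 T) :=
      (continuousOn_const.mul hEcont).div hDcont (fun t ht => (hDpos t ht).ne')
    exact this.congr (fun t _ => hyED t)
  have hScont : ContinuousOn S (Set.Icc 0 T) :=
    fun t ht => ((hderiv t ht).continuousAt).continuousWithinAt
  -- The auxiliary coefficient and its primitive
  set c : ℝ → ℝ := fun t => (2 / n) * (S t + y t - r t) with hc
  have hccont : ContinuousOn c (Set.Icc 0 T) :=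
    continuousOn_const.mul ((hScont.add hycont).sub hr)
  set C : ℝ → ℝ := fun t => ∫ x in (0:ℝ)..t, c x with hC

  have hCcont : ContinuousOn C (Set.Icc 0 T) := aux_primitive_cont hT.le c hccont
  set g : ℝ → ℝ := fun t => (S t - y t) * Real.exp (-C t) with hg
  have hgcont : ContinuousOn g (Set.Icc 0 T) :=
    (hScont.sub hycont).mul (Real.continuous_exp.comp_continuousOn hCcont.neg)
  -- derivative of g at interior points
  have hg' : ∀ t ∈ Set.Ioo (0:ℝ) T,
      HasDerivAt g ((S' t - (2 / n) * y t * (y t - r t)) * Real.exp (-C t)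
        + (S t - y t) * (Real.exp (-C t) * -(c t))) t := by
    intro t ht
    have htI : t ∈ Set.Icc (0:ℝ) T := Set.Ioo_subset_Icc_self ht
    have hR' : HasDerivAt (fun u => ∫ x in (0:ℝ)..u, r x) (r t) t := aux_ftc r hr ht
    have hE' : HasDerivAt E (E t * (-(2 / n) * r t)) t := (hR'.const_mul (-(2 / n))).exp
    have hI' : HasDerivAt (fun u => ∫ s in (0:ℝ)..u, E s) (E t) t := aux_ftc E hEcont ht
    have hD' : HasDerivAt D (-((2 / n) * S₀ * E t)) t :=
      (hI'.const_mul ((2 / n) * S₀)).const_sub 1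
    have hy' : HasDerivAt y ((2 / n) * y t * (y t - r t)) t := by
      have h1 : HasDerivAt (fun u => S₀ * E u / D u)
          ((S₀ * (E t * (-(2 / n) * r t)) * D t - S₀ * E t * -((2 / n) * S₀ * E t)) / D t ^ 2)
          t := (hE'.const_mul S₀).div hD' (hDpos t htI).ne'
      have hyfun : y = fun u => S₀ * E u / D u := funext hyED
      rw [← hyfun] at h1
      convert h1 using 1
      rw [hyED t]
      have hDne : D t ≠ 0 := (hDpos t htI).ne'
      field_simp
      ring
    have hC' : HasDerivAt C (c t) t := aux_ftc c hccont ht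
    have hexp' : HasDerivAt (fun u => Real.exp (-C u)) (Real.exp (-C t) * -(c t)) t :=
      hC'.neg.exp
    exact ((hderiv t htI).sub hy').mul hexp'
  -- monotonicity of g
  have hmono : MonotoneOn g (Set.Icc 0 T) := by
    apply monotoneOn_of_deriv_nonneg (convex_Icc 0 T) hgcont
    · intro t ht
      rw [interior_Icc] at ht
      exact (hg' t ht).differentiableAt.differentiableWithinAt
    · intro t ht
      rw [interior_Icc] at ht
      rw [(hg' t ht).deriv]
      have htI : t ∈ Set.Icc (0:ℝ) T := Set.Ioo_subset_Icc_self ht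
      have h1 : 0 ≤ S' t - (2 / n) * y t * (y t - r t) - c t * (S t - y t) := by
        have h2 := hineq t htI
        have h3 : (2 / n) * S t * (S t - r t) - (2 / n) * y t * (y t - r t)
            - c t * (S t - y t) = 0 := by
          simp only [hc]; ring
        linarith
      have heq : (S' t - (2 / n) * y t * (y t - r t)) * Real.exp (-C t)
          + (S t - y t) * (Real.exp (-C t) * -(c t))
          = (S' t - (2 / n) * y t * (y t - r t) - c t * (S t - y t)) * Real.exp (-C t) := by
        ring
      rw [heq]
      exact mul_nonneg h1 (Real.exp_pos _).le
  -- conclusion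
  intro t ht
  have h0 : (0:ℝ) ∈ Set.Icc (0:ℝ) T := Set.left_mem_Icc.mpr hT.le
  have hC0 : C 0 = 0 := by simp [hC]
  have hy0 : y 0 = S₀ := by
    have hE0 : E 0 = 1 := by simp [hE]
    have hD0 : D 0 = 1 := by simp [hD]
    rw [hyED 0, hE0, hD0]; ring
  have hg0 : 0 ≤ g 0 := by
    simp only [hg, hC0, hy0, neg_zero, Real.exp_zero, mul_one]
    linarith
  have hgt : g 0 ≤ g t := hmono h0 ht ht.1
  have hwnn : 0 ≤ (S t - y t) * Real.exp (-C t) := le_trans hg0 hgt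
  have hfin : 0 ≤ S t - y t :=
    (mul_nonneg_iff_of_pos_right (Real.exp_pos _)).mp hwnn
  linarith
end
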